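/- With 𝒢 a connected finite groupoid, x ∈ 𝒢₀, τ(x) a transversal, θ = Ext(γ) a unital partial action of 𝒢 on A = ⊕_{y∈𝒢₀} B_y with B_g = A·1_g, 1_g = γ_{τ_{t(g)}}(1_{g_x}): an element b = Σ_{y∈𝒢₀} b_y (b_y ∈ B_y) is θ-invariant (i.e. θ_g(b·1_{g⁻¹}) = b·1_g for all g ∈ 𝒢) if and only if b_x is invariant under the partial group action θ_{(x)} of 𝒢(x) on B_x and b_y = γ_{τ_y}(b_x) for all y ∈ 𝒢₀. -/
import Mathlib


open CategoryTheory

universe u v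

def IsIdealIn {A : Type u} [NonUnitalRing A] (S T : Set A) : Prop :=
  S ⊆ T ∧ (0 : A) ∈ S ∧ (∀ a ∈ S, ∀ b ∈ S, a + b ∈ S) ∧ (∀ a ∈ S, -a ∈ S) ∧
    ∀ t ∈ T, ∀ s ∈ S, t * s ∈ S ∧ s * t ∈ S

structure PartialAction (G : Type v) [Groupoid G] (A : Type u) [NonUnitalRing A] where
  D : ∀ {x y : G}, (x ⟶ y) → Set A
  act : ∀ {x y : G}, (x ⟶ y) → A → A
  ideal_base : ∀ y : G, IsIdealIn (D (𝟙 y)) Set.univ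
  ideal_dom : ∀ {x y : G} (g : x ⟶ y), IsIdealIn (D g) (D (𝟙 y))
  act_mem : ∀ {x y : G} (g : x ⟶ y), ∀ a ∈ D (Groupoid.inv g), act g a ∈ D g
  act_add : ∀ {x y : G} (g : x ⟶ y), ∀ a ∈ D (Groupoid.inv g), ∀ b ∈ D (Groupoid.inv g),
    act g (a + b) = act g a + act g b
  act_mul : ∀ {x y : G} (g : x ⟶ y), ∀ a ∈ D (Groupoid.inv g), ∀ b ∈ D (Groupoid.inv g),
    act g (a * b) = act g a * act g b
  act_inj : ∀ {x y : G} (g : x ⟶ y), ∀ a ∈ D (Groupoid.inv g), ∀ b ∈ D (Groupoid.inv g),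
    act g a = act g b → a = b
  act_surj : ∀ {x y : G} (g : x ⟶ y), ∀ c ∈ D g, ∃ a ∈ D (Groupoid.inv g), act g a = c
  act_id : ∀ y : G, ∀ a ∈ D (𝟙 y), act (𝟙 y) a = a
  mem_comp : ∀ {w x y : G} (g : x ⟶ y) (h : w ⟶ x), ∀ a ∈ D (Groupoid.inv h),
    act h a ∈ D (Groupoid.inv g) ∩ D h → a ∈ D (Groupoid.inv (h ≫ g))
  act_comp : ∀ {w x y : G} (g : x ⟶ y) (h : w ⟶ x), ∀ a ∈ D (Groupoid.inv h),
    act h a ∈ D (Groupoid.inv g) ∩ D h → act g (act h a) = act (h ≫ g) a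

def IsId {G : Type v} [Groupoid G] {y z : G} (g : y ⟶ z) : Prop :=
  ∃ h : y = z, g = eqToHom h

/-!
STATEMENT 12: 𝒢 a connected finite groupoid, x ∈ 𝒢₀, τ(x) a transversal, θ = Ext(γ) a
unital partial action of 𝒢 on A = ⊕_{y∈𝒢₀} B_y, with B_g = A·1_g for central
idempotents 1_g (here e g) — the condition θ = Ext(γ) with I_{τ_y⁻¹} = I_x and
I_{τ_y} = I_y being encoded by the group-type hypotheses hgt1, hgt2, under which
γ_{τ_y} = θ_{τ_y} and γ_{(x)} = θ_{(x)}.  An element b = Σ_y b_y (b_y ∈ B_y) is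
θ-invariant (θ_g(b·1_{g⁻¹}) = b·1_g for all g) iff b_x is invariant under the partial
action θ_{(x)} of 𝒢(x) on B_x and b_y = γ_{τ_y}(b_x) = θ_{τ_y}(b_x) for all y.
-/

section Aux

variable {G : Type v} [Groupoid G] {A : Type u} [NonUnitalRing A]
variable {θ : PartialAction G A} {e : ∀ {y z : G}, (y ⟶ z) → A}

theorem PA.ginv_inv {y z : G} (g : y ⟶ z) : Groupoid.inv (Groupoid.inv g) = g := by
  simp [Groupoid.inv_eq_inv]

theorem PA.D_sub_unit {y z : G} (g : y ⟶ z) : θ.D g ⊆ θ.D (𝟙 z) := (θ.ideal_dom g).1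

theorem PA.act_inv_act {u v : G} (p : u ⟶ v) {a : A} (ha : a ∈ θ.D (Groupoid.inv p)) :
    θ.act (Groupoid.inv p) (θ.act p a) = a := by
  have h1 : θ.act p a ∈ θ.D p := θ.act_mem p a ha
  have h2 := θ.act_comp (Groupoid.inv p) p a ha ⟨by rw [PA.ginv_inv]; exact h1, h1⟩
  rw [h2, Groupoid.comp_inv]
  exact θ.act_id u a (PA.D_sub_unit (Groupoid.inv p) ha)

theorem PA.act_act_inv {u v : G} (p : u ⟶ v) {a : A} (ha : a ∈ θ.D p) :
    θ.act p (θ.act (Groupoid.inv p) a) = a := by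
  have := PA.act_inv_act (θ := θ) (Groupoid.inv p) (a := a) (by rw [PA.ginv_inv]; exact ha)
  rwa [PA.ginv_inv] at this

theorem PA.comp_glob {u v w : G} (p : u ⟶ v) (q : v ⟶ w)
    (hq2 : θ.D q = θ.D (𝟙 w)) {a : A} (ha : a ∈ θ.D (Groupoid.inv (p ≫ q))) :
    a ∈ θ.D (Groupoid.inv p) ∧ θ.act (p ≫ q) a = θ.act q (θ.act p a) := by
  have hs : θ.act (p ≫ q) a ∈ θ.D (p ≫ q) := θ.act_mem _ a ha
  have hsq : θ.act (p ≫ q) a ∈ θ.D q := by rw [hq2]; exact PA.D_sub_unit _ hs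
  have cond : θ.act (p ≫ q) a ∈ θ.D (Groupoid.inv (Groupoid.inv q)) ∩ θ.D (p ≫ q) :=
    ⟨by rw [PA.ginv_inv]; exact hsq, hs⟩
  have hsimp : (p ≫ q) ≫ Groupoid.inv q = p := by
    rw [Category.assoc, Groupoid.comp_inv, Category.comp_id]
  have memc := θ.mem_comp (Groupoid.inv q) (p ≫ q) a ha cond
  rw [hsimp] at memc
  have actc := θ.act_comp (Groupoid.inv q) (p ≫ q) a ha cond
  rw [hsimp] at actc
  refine ⟨memc, ?_⟩
  rw [← actc]
  exact (PA.act_act_inv q hsq).symm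

theorem PA.pre_glob {u v w : G} (p : u ⟶ v) (q : v ⟶ w)
    (hp1 : θ.D (Groupoid.inv p) = θ.D (𝟙 u)) (hp2 : θ.D p = θ.D (𝟙 v))
    {a : A} (ha : a ∈ θ.D (Groupoid.inv q)) :
    θ.act (Groupoid.inv p) a ∈ θ.D (Groupoid.inv (p ≫ q)) ∧
      θ.act q a = θ.act (p ≫ q) (θ.act (Groupoid.inv p) a) := by
  have ha1 : a ∈ θ.D (𝟙 v) := PA.D_sub_unit _ ha
  have hap : a ∈ θ.D p := by rw [hp2]; exact ha1
  have hap' : a ∈ θ.D (Groupoid.inv (Groupoid.inv p)) := by rw [PA.ginv_inv]; exact hap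
  have hw0m : θ.act (Groupoid.inv p) a ∈ θ.D (Groupoid.inv p) := θ.act_mem (Groupoid.inv p) a hap'
  have hback : θ.act p (θ.act (Groupoid.inv p) a) = a := PA.act_act_inv p hap
  have cond : θ.act p (θ.act (Groupoid.inv p) a) ∈ θ.D (Groupoid.inv q) ∩ θ.D p :=
    ⟨by rw [hback]; exact ha, θ.act_mem p _ hw0m⟩
  have memc := θ.mem_comp q p _ hw0m cond
  have actc := θ.act_comp q p _ hw0m cond
  rw [hback] at actc
  exact ⟨memc, actc⟩

theorem PA.e_mem
    (hDe : ∀ {y z : G} (g : y ⟶ z), θ.D g = {a : A | ∃ b : A, a = b * e g})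
    (he_idem : ∀ {y z : G} (g : y ⟶ z), e g * e g = e g)
    {y z : G} (g : y ⟶ z) : e g ∈ θ.D g := by
  rw [hDe]; exact ⟨e g, (he_idem g).symm⟩

theorem PA.mul_e_mem
    (hDe : ∀ {y z : G} (g : y ⟶ z), θ.D g = {a : A | ∃ b : A, a = b * e g})
    {y z : G} (g : y ⟶ z) (a : A) : a * e g ∈ θ.D g := by
  rw [hDe]; exact ⟨a, rfl⟩

theorem PA.mul_e_self
    (hDe : ∀ {y z : G} (g : y ⟶ z), θ.D g = {a : A | ∃ b : A, a = b * e g})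
    (he_idem : ∀ {y z : G} (g : y ⟶ z), e g * e g = e g)
    {y z : G} (g : y ⟶ z) {a : A} (ha : a ∈ θ.D g) : a * e g = a := by
  rw [hDe] at ha
  obtain ⟨c, rfl⟩ := ha
  rw [mul_assoc, he_idem]

theorem PA.e_mul_self
    (hDe : ∀ {y z : G} (g : y ⟶ z), θ.D g = {a : A | ∃ b : A, a = b * e g})
    (he_idem : ∀ {y z : G} (g : y ⟶ z), e g * e g = e g)
    (he_cent : ∀ {y z : G} (g : y ⟶ z) (b : A), e g * b = b * e g)
    {y z : G} (g : y ⟶ z) {a : A} (ha : a ∈ θ.D g) : e g * a = a := by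
  rw [he_cent]; exact PA.mul_e_self hDe he_idem g ha

theorem PA.act_e
    (hDe : ∀ {y z : G} (g : y ⟶ z), θ.D g = {a : A | ∃ b : A, a = b * e g})
    (he_idem : ∀ {y z : G} (g : y ⟶ z), e g * e g = e g)
    (he_cent : ∀ {y z : G} (g : y ⟶ z) (b : A), e g * b = b * e g)
    {y z : G} (g : y ⟶ z) : θ.act g (e (Groupoid.inv g)) = e g := by
  have hei : e (Groupoid.inv g) ∈ θ.D (Groupoid.inv g) := PA.e_mem hDe he_idem _
  have hf : θ.act g (e (Groupoid.inv g)) ∈ θ.D g := θ.act_mem g _ hei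
  obtain ⟨d, hd, hdg⟩ := θ.act_surj g (e g) (PA.e_mem hDe he_idem g)
  have hed : e (Groupoid.inv g) * d = d := PA.e_mul_self hDe he_idem he_cent _ hd
  calc θ.act g (e (Groupoid.inv g))
      = θ.act g (e (Groupoid.inv g)) * e g := (PA.mul_e_self hDe he_idem g hf).symm
    _ = θ.act g (e (Groupoid.inv g)) * θ.act g d := by rw [hdg]
    _ = θ.act g (e (Groupoid.inv g) * d) := (θ.act_mul g _ hei d hd).symm
    _ = θ.act g d := by rw [hed]
    _ = e g := hdg

theorem PA.act_glob_e
    (hDe : ∀ {y z : G} (g : y ⟶ z), θ.D g = {a : A | ∃ b : A, a = b * e g})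
    (he_idem : ∀ {y z : G} (g : y ⟶ z), e g * e g = e g)
    (he_cent : ∀ {y z : G} (g : y ⟶ z) (b : A), e g * b = b * e g)
    {u v w : G} (p : u ⟶ v) (q : v ⟶ w)
    (hq1 : θ.D (Groupoid.inv q) = θ.D (𝟙 v)) (hq2 : θ.D q = θ.D (𝟙 w)) :
    θ.act q (e p) = e (p ≫ q) := by
  have hep : e p ∈ θ.D p := PA.e_mem hDe he_idem p
  have hep' : e p ∈ θ.D (Groupoid.inv q) := by rw [hq1]; exact PA.D_sub_unit p hep
  obtain ⟨a0, ha0, ha0e⟩ := θ.act_surj p (e p) hep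
  have cond : θ.act p a0 ∈ θ.D (Groupoid.inv q) ∩ θ.D p := by
    rw [ha0e]; exact ⟨hep', hep⟩
  have memc := θ.mem_comp q p a0 ha0 cond
  have actc := θ.act_comp q p a0 ha0 cond
  rw [ha0e] at actc
  have hf : θ.act q (e p) ∈ θ.D (p ≫ q) := by
    rw [actc]; exact θ.act_mem _ a0 memc
  obtain ⟨d, hd, hde⟩ := θ.act_surj (p ≫ q) (e (p ≫ q)) (PA.e_mem hDe he_idem (p ≫ q))
  obtain ⟨hd_p, hcmp⟩ := PA.comp_glob p q hq2 hd
  have h1 : e p * θ.act p d = θ.act p d :=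
    PA.e_mul_self hDe he_idem he_cent p (θ.act_mem p d hd_p)
  have h2 : θ.act p d ∈ θ.D (Groupoid.inv q) := by
    rw [hq1]; exact PA.D_sub_unit p (θ.act_mem p d hd_p)
  have key : θ.act q (e p) * e (p ≫ q) = e (p ≫ q) := by
    calc θ.act q (e p) * e (p ≫ q)
        = θ.act q (e p) * θ.act q (θ.act p d) := by rw [← hde, hcmp]
      _ = θ.act q (e p * θ.act p d) := (θ.act_mul q _ hep' _ h2).symm
      _ = θ.act q (θ.act p d) := by rw [h1]
      _ = e (p ≫ q) := by rw [← hcmp, hde]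
  exact (PA.mul_e_self hDe he_idem (p ≫ q) hf).symm.trans key

end Aux

theorem extension_partial_actions_stmt12
    {G : Type v} [Groupoid G] {A : Type u} [NonUnitalRing A]
    [Fintype G] [∀ y z : G, Fintype (y ⟶ z)]
    (hconn : ∀ a b : G, Nonempty (a ⟶ b))
    (x : G) (τ : ∀ y : G, x ⟶ y) (hτx : τ x = 𝟙 x)
    (θ : PartialAction G A)
    (e : ∀ {y z : G}, (y ⟶ z) → A)
    (he_idem : ∀ {y z : G} (g : y ⟶ z), e g * e g = e g)
    (he_cent : ∀ {y z : G} (g : y ⟶ z) (b : A), e g * b = b * e g)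
    (hDe : ∀ {y z : G} (g : y ⟶ z), θ.D g = {a : A | ∃ b : A, a = b * e g})
    (hgt1 : ∀ y : G, θ.D (Groupoid.inv (τ y)) = θ.D (𝟙 x))
    (hgt2 : ∀ y : G, θ.D (τ y) = θ.D (𝟙 y))
    (horth : ∀ y z : G, y ≠ z → ∀ a ∈ θ.D (𝟙 y), ∀ b ∈ θ.D (𝟙 z), a * b = 0)
    (hspan : ∀ a : A, ∃ f : G → A, (∀ y : G, f y ∈ θ.D (𝟙 y)) ∧ a = ∑ y : G, f y)
    (b : G → A) (hb : ∀ y : G, b y ∈ θ.D (𝟙 y)) :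
    (∀ {y z : G} (g : y ⟶ z),
        θ.act g ((∑ w : G, b w) * e (Groupoid.inv g)) = (∑ w : G, b w) * e g)
      ↔ ((∀ h : x ⟶ x, θ.act h (b x * e (Groupoid.inv h)) = b x * e h) ∧
          ∀ y : G, b y = θ.act (τ y) (b x)) := by
  classical
  have hemem : ∀ {y z : G} (g : y ⟶ z), e g ∈ θ.D g := fun g => PA.e_mem hDe he_idem g
  have hsum : ∀ {y z : G} (g : y ⟶ z), (∑ w : G, b w) * e g = b z * e g := by
    intro y z g
    rw [Finset.sum_mul]
    refine Finset.sum_eq_single z (fun w _ hw => ?_) (fun hz => absurd (Finset.mem_univ z) hz)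
    exact horth w z hw (b w) (hb w) (e g) (PA.D_sub_unit g (hemem g))
  constructor
  · intro H
    refine ⟨fun h => ?_, fun y => ?_⟩
    · have hh := H h
      rwa [hsum (Groupoid.inv h), hsum h] at hh
    · have hh := H (τ y)
      rw [hsum (Groupoid.inv (τ y)), hsum (τ y)] at hh
      have h1 : b x ∈ θ.D (Groupoid.inv (τ y)) := by rw [hgt1]; exact hb x
      have h2 : b y ∈ θ.D (τ y) := by rw [hgt2]; exact hb y
      rw [PA.mul_e_self hDe he_idem _ h1, PA.mul_e_self hDe he_idem _ h2] at hh
      exact hh.symm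
  · rintro ⟨H1, H2⟩ y z g
    rw [hsum (Groupoid.inv g), hsum g]
    have hby : b y = θ.act (τ y) (b x) := H2 y
    have hbz : b z = θ.act (τ z) (b x) := H2 z
    have hcτ : ∀ w : G, b x ∈ θ.D (Groupoid.inv (τ w)) := fun w => by rw [hgt1]; exact hb x
    set h : x ⟶ x := τ y ≫ g ≫ Groupoid.inv (τ z) with hh
    have hcomp : τ y ≫ g = h ≫ τ z := by
      rw [hh]
      simp
    -- decompose the action on b y * e (inv g)
    have hu' : b y * e (Groupoid.inv g) ∈ θ.D (Groupoid.inv g) := PA.mul_e_mem hDe _ _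
    obtain ⟨hw0mem, hact1⟩ := PA.pre_glob (τ y) g (hgt1 y) (hgt2 y) hu'
    rw [hcomp] at hw0mem hact1
    obtain ⟨hw0h, hact2⟩ := PA.comp_glob h (τ z) (hgt2 z) hw0mem
    -- the element m
    have hem : e (Groupoid.inv g) ∈ θ.D (Groupoid.inv g) := hemem _
    obtain ⟨hmmem, hact3⟩ := PA.pre_glob (τ y) g (hgt1 y) (hgt2 y) hem
    rw [hcomp] at hmmem hact3
    obtain ⟨hmh, hact4⟩ := PA.comp_glob h (τ z) (hgt2 z) hmmem
    set m : A := θ.act (Groupoid.inv (τ y)) (e (Groupoid.inv g)) with hm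
    have hage : θ.act g (e (Groupoid.inv g)) = e g := PA.act_e hDe he_idem he_cent g
    have hkey : θ.act (τ z) (θ.act h m) = e g := by rw [← hact4, ← hact3, hage]
    -- w0 = b x * m
    have hsplit : θ.act (Groupoid.inv (τ y)) (b y * e (Groupoid.inv g)) = b x * m := by
      rw [hby, hm]
      have h1 : θ.act (τ y) (b x) ∈ θ.D (Groupoid.inv (Groupoid.inv (τ y))) := by
        rw [PA.ginv_inv]; exact θ.act_mem _ (b x) (hcτ y)
      have h2 : e (Groupoid.inv g) ∈ θ.D (Groupoid.inv (Groupoid.inv (τ y))) := by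
        rw [PA.ginv_inv, hgt2]; exact PA.D_sub_unit _ hem
      rw [θ.act_mul (Groupoid.inv (τ y)) _ h1 _ h2, PA.act_inv_act (τ y) (hcτ y)]
    have hme : m * e (Groupoid.inv h) = m := PA.mul_e_self hDe he_idem _ hmh
    have hw0split : θ.act (Groupoid.inv (τ y)) (b y * e (Groupoid.inv g))
        = (b x * e (Groupoid.inv h)) * m := by
      rw [hsplit]
      conv_rhs => rw [mul_assoc, he_cent (Groupoid.inv h) m, hme]
    have hceh : b x * e (Groupoid.inv h) ∈ θ.D (Groupoid.inv h) := PA.mul_e_mem hDe _ _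
    have hsplit2 : θ.act h (θ.act (Groupoid.inv (τ y)) (b y * e (Groupoid.inv g)))
        = (b x * e h) * θ.act h m := by
      rw [hw0split, θ.act_mul h _ hceh _ hmh, H1 h]
    -- memberships in D (inv (τ z)) = D (𝟙 x)
    have hDh : θ.D h ⊆ θ.D (Groupoid.inv (τ z)) := by
      rw [hgt1]; exact PA.D_sub_unit h
    have hin1 : b x * e h ∈ θ.D (Groupoid.inv (τ z)) := hDh (PA.mul_e_mem hDe _ _)
    have hin2 : θ.act h m ∈ θ.D (Groupoid.inv (τ z)) := hDh (θ.act_mem h m hmh)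
    have hin3 : b x ∈ θ.D (Groupoid.inv (τ z)) := hcτ z
    have hin4 : e h ∈ θ.D (Groupoid.inv (τ z)) := hDh (hemem h)
    -- e (h ≫ τ z) absorbs e g
    have hegmem : e g ∈ θ.D (h ≫ τ z) := by
      obtain ⟨d, hd, hde⟩ := θ.act_surj g (e g) (hemem g)
      obtain ⟨hdm, hdact⟩ := PA.pre_glob (τ y) g (hgt1 y) (hgt2 y) hd
      rw [hcomp] at hdm hdact
      rw [← hde, hdact]
      exact θ.act_mem _ _ hdm
    have habs : e (h ≫ τ z) * e g = e g := by
      rw [he_cent]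
      exact PA.mul_e_self hDe he_idem _ hegmem
    calc θ.act g (b y * e (Groupoid.inv g))
        = θ.act (h ≫ τ z) (θ.act (Groupoid.inv (τ y)) (b y * e (Groupoid.inv g))) := hact1
      _ = θ.act (τ z) (θ.act h (θ.act (Groupoid.inv (τ y)) (b y * e (Groupoid.inv g)))) := hact2
      _ = θ.act (τ z) ((b x * e h) * θ.act h m) := by rw [hsplit2]
      _ = θ.act (τ z) (b x * e h) * θ.act (τ z) (θ.act h m) := θ.act_mul (τ z) _ hin1 _ hin2
      _ = (θ.act (τ z) (b x) * θ.act (τ z) (e h)) * e g := by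
          rw [hkey, θ.act_mul (τ z) _ hin3 _ hin4]
      _ = (b z * e (h ≫ τ z)) * e g := by
          rw [← hbz, PA.act_glob_e hDe he_idem he_cent h (τ z) (hgt1 z) (hgt2 z)]
      _ = b z * e g := by rw [mul_assoc, habs]
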